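/- Hierarchical representation of the univariate skew-t distribution: if λ ∼ Gamma(ν/2, ν/2), u | λ ∼ N_+(0, λ^{-1}) (normal truncated to [0,∞)), and e | u, λ ∼ N(δu, λ^{-1}σ²), then the marginal density of e is ST(0, σ², δ, ν), i.e. 2 t(e; 0, σ²+δ², ν) T(ẽ; 0, 1, ν+1) with ẽ = (eδ/σ)√((ν+1)/(ν(σ²+δ²)+e²)). -/

import Mathlib

/-!
Completing the square in `u` turns `N(e; δu, σ²/λ) N(u; 0, 1/λ)` into
`N(e; 0, (σ² + δ²)/λ) N(u; δe/(σ² + δ²), σ²/(λ(σ² + δ²)))`, and after reflecting and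
rescaling, the integral over `u ≥ 0` becomes `∫_{y ≤ eδ/σ} N(y; 0, (σ² + δ²)/λ) dy`.
Once the `λ`- and `y`-integrals are exchanged, the Gamma mixture of the two normal factors
in `e` and `y` is a bivariate t density. It splits into the `t_ν` density of `e` times the
`t_{ν+1}` density of `y` with scale `(ν(σ² + δ²) + e²)/(ν + 1)`, and integrating the second
factor over `y ≤ eδ/σ` gives the `T_{ν+1}` factor of the skew t density.
-/

open MeasureTheory Real

/-- Normal density with mean `μ` and variance `v`. -/
noncomputable def normalPDF (μ v x : ℝ) : ℝ :=
  Real.exp (-(x - μ) ^ 2 / (2 * v)) / Real.sqrt (2 * Real.pi * v)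

/-- Gamma density with shape `α` and rate `β`. -/
noncomputable def gammaPDF (α β l : ℝ) : ℝ :=
  β ^ α * l ^ (α - 1) * Real.exp (-β * l) / Real.Gamma α

noncomputable def tPDF (μ s2 ν x : ℝ) : ℝ :=
  Real.Gamma ((ν + 1) / 2) / (Real.sqrt s2 * Real.sqrt (ν * Real.pi) * Real.Gamma (ν / 2)) *
    (1 + (x - μ) ^ 2 / (ν * s2)) ^ (-((ν + 1) / 2))

noncomputable def tCDF (ν x : ℝ) : ℝ := ∫ t in Set.Iic x, tPDF 0 1 ν t

noncomputable def stPDF (μ σ δ ν z : ℝ) : ℝ :=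
  2 * tPDF μ (σ ^ 2 + δ ^ 2) ν z *
    tCDF (ν + 1) ((z - μ) * δ / σ * Real.sqrt ((ν + 1) / (ν * (σ ^ 2 + δ ^ 2) + (z - μ) ^ 2)))

open Set

lemma normalPDF_nonneg (m v x : ℝ) : 0 ≤ normalPDF m v x := by
  unfold normalPDF; positivity

lemma normalPDF_mul_normalPDF {σ w : ℝ} (hσ : σ ≠ 0) (hw : 0 < w) (δ e u : ℝ) :
    normalPDF (δ * u) (σ ^ 2 * w) e * normalPDF 0 w u =
      normalPDF 0 ((σ ^ 2 + δ ^ 2) * w) e *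
        normalPDF (δ * e / (σ ^ 2 + δ ^ 2)) (σ ^ 2 * w / (σ ^ 2 + δ ^ 2)) u := by
  unfold normalPDF
  rw [div_mul_div_comm, div_mul_div_comm, ← Real.exp_add, ← Real.exp_add,
    ← Real.sqrt_mul (by positivity), ← Real.sqrt_mul (by positivity)]
  congr 2
  · field_simp; ring
  · field_simp

lemma setIntegral_Ici_zero_normalPDF (m v : ℝ) :
    ∫ u in Ici 0, normalPDF m v u = ∫ t in Iic m, normalPDF 0 v t := by
  have hsymm (u : ℝ) : normalPDF 0 v (m - u) = normalPDF m v u := by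
    unfold normalPDF; ring_nf
  rw [← integral_indicator measurableSet_Ici, ← integral_indicator measurableSet_Iic,
    ← integral_sub_left_eq_self ((Iic m).indicator (normalPDF 0 v)) volume m]
  congr 1
  ext u
  simp only [indicator_apply, mem_Ici, mem_Iic, sub_le_self_iff, hsymm]

lemma integral_comp_mul_left_Iic {E : Type*} [NormedAddCommGroup E] [NormedSpace ℝ E]
    (g : ℝ → E) (a : ℝ) {b : ℝ} (hb : 0 < b) :
    ∫ x in Iic a, g (b * x) = b⁻¹ • ∫ x in Iic (b * a), g x := by
  rw [← integral_indicator measurableSet_Iic, ← integral_indicator measurableSet_Iic,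
    ← abs_of_pos (inv_pos.mpr hb), ← Measure.integral_comp_mul_left]
  congr 1
  ext x
  simp only [indicator, mem_Iic, mul_le_mul_iff_right₀ hb]

lemma normalPDF_zero_sq_mul {r : ℝ} (hr : 0 < r) (v t : ℝ) :
    normalPDF 0 (r ^ 2 * v) (r * t) = r⁻¹ * normalPDF 0 v t := by
  unfold normalPDF
  rw [show -(r * t - 0) ^ 2 = r ^ 2 * -(t - 0) ^ 2 by ring,
    show 2 * (r ^ 2 * v) = r ^ 2 * (2 * v) by ring, mul_div_mul_left _ _ (by positivity),
    show 2 * π * (r ^ 2 * v) = r ^ 2 * (2 * π * v) by ring, Real.sqrt_mul (by positivity),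
    Real.sqrt_sq hr.le]
  ring

lemma setIntegral_Iic_normalPDF_zero_sq_mul {r : ℝ} (hr : 0 < r) (v x : ℝ) :
    ∫ t in Iic (r * x), normalPDF 0 (r ^ 2 * v) t = ∫ t in Iic x, normalPDF 0 v t := by
  calc ∫ t in Iic (r * x), normalPDF 0 (r ^ 2 * v) t
      = r * ∫ t in Iic x, normalPDF 0 (r ^ 2 * v) (r * t) := by
        rw [integral_comp_mul_left_Iic _ _ hr, smul_eq_mul, mul_inv_cancel_left₀ hr.ne']
    _ = ∫ t in Iic x, normalPDF 0 v t := by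
        simp_rw [normalPDF_zero_sq_mul hr, integral_const_mul, mul_inv_cancel_left₀ hr.ne']

lemma setIntegral_Ici_normalPDF_mul_normalPDF {σ w : ℝ} (hσ : 0 < σ) (hw : 0 < w)
    (δ e : ℝ) :
    ∫ u in Ici 0, normalPDF (δ * u) (σ ^ 2 * w) e * normalPDF 0 w u =
      ∫ y in Iic (e * δ / σ),
        normalPDF 0 ((σ ^ 2 + δ ^ 2) * w) e * normalPDF 0 ((σ ^ 2 + δ ^ 2) * w) y := by
  set r := σ / (σ ^ 2 + δ ^ 2)
  have hr : 0 < r := by positivity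
  have hmean : r * (e * δ / σ) = δ * e / (σ ^ 2 + δ ^ 2) := by
    simp only [r]; field_simp
  have hvar : r ^ 2 * ((σ ^ 2 + δ ^ 2) * w) = σ ^ 2 * w / (σ ^ 2 + δ ^ 2) := by
    simp only [r]; field_simp
  simp_rw [normalPDF_mul_normalPDF hσ.ne' hw, integral_const_mul, setIntegral_Ici_zero_normalPDF,
    ← hmean, ← hvar, setIntegral_Iic_normalPDF_zero_sq_mul hr]

lemma tPDF_mul_tPDF {s ν : ℝ} (hs : 0 < s) (hν : 0 < ν) (x y : ℝ) :
    tPDF 0 s ν x * tPDF 0 ((ν * s + x ^ 2) / (ν + 1)) (ν + 1) y =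
      ν ^ (ν / 2) * s ^ (ν / 2) * Gamma (ν / 2 + 1) / (π * Gamma (ν / 2)) *
        (ν * s + x ^ 2 + y ^ 2) ^ (-(ν / 2 + 1)) := by
  set D := ν * s + x ^ 2
  have hDpos : 0 < D := by positivity
  have hx : (1 + (x - 0) ^ 2 / (ν * s)) ^ (-((ν + 1) / 2)) =
      (ν * s) ^ ((ν + 1) / 2) / D ^ ((ν + 1) / 2) := by
    rw [show 1 + (x - 0) ^ 2 / (ν * s) = D / (ν * s) by field_simp; ring,
      Real.rpow_neg (by positivity), Real.div_rpow (by positivity) (by positivity), inv_div]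
  have hy : (1 + (y - 0) ^ 2 / ((ν + 1) * (D / (ν + 1)))) ^ (-((ν + 1 + 1) / 2)) =
      D ^ ((ν + 1) / 2) * √D / (D + y ^ 2) ^ (ν / 2 + 1) := by
    rw [show 1 + (y - 0) ^ 2 / ((ν + 1) * (D / (ν + 1))) = (D + y ^ 2) / D by field_simp; ring,
      Real.rpow_neg (by positivity), Real.div_rpow (by positivity) hDpos.le, inv_div,
      sqrt_eq_rpow, ← rpow_add hDpos]
    ring_nf
  have hscale : √(D / (ν + 1)) * √((ν + 1) * π) = √D * √π := by
    rw [← sqrt_mul (by positivity), ← sqrt_mul hDpos.le]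
    congr 1
    field_simp
  have hνs : (ν * s) ^ ((ν + 1) / 2) = ν ^ (ν / 2) * s ^ (ν / 2) * (√ν * √s) := by
    rw [sqrt_eq_rpow, sqrt_eq_rpow, ← mul_rpow hν.le hs.le, ← mul_rpow hν.le hs.le,
      ← rpow_add (by positivity)]
    ring_nf
  unfold tPDF
  rw [hx, hy, hscale, hνs, sqrt_mul hν.le, Real.rpow_neg (by positivity)]
  field_simp
  rw [sq_sqrt pi_pos.le, show (ν + 1 + 1) / 2 = (ν + 2) / 2 by ring]
  ring

lemma normalPDF_mul_normalPDF_mul_gammaPDF {s l : ℝ} (hs : 0 < s) (hl : 0 < l) (ν x y : ℝ) :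
    normalPDF 0 (s / l) x * normalPDF 0 (s / l) y * gammaPDF (ν / 2) (ν / 2) l =
      (ν / 2) ^ (ν / 2) / (2 * π * s * Gamma (ν / 2)) *
        (l ^ (ν / 2) * exp (-((ν * s + x ^ 2 + y ^ 2) / (2 * s) * l))) := by
  have hexp : exp (-(x - 0) ^ 2 / (2 * (s / l))) * exp (-(y - 0) ^ 2 / (2 * (s / l))) *
      exp (-(ν / 2) * l) = exp (-((ν * s + x ^ 2 + y ^ 2) / (2 * s) * l)) := by
    rw [← exp_add, ← exp_add]
    congr 1
    field_simp
    ring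
  have hsqrt : √(2 * π * (s / l)) * √(2 * π * (s / l)) = 2 * π * s / l := by
    rw [mul_self_sqrt (by positivity)]
    ring
  unfold normalPDF gammaPDF
  rw [div_mul_div_comm, hsqrt, rpow_sub_one hl.ne', ← hexp]
  field_simp

lemma integral_normalPDF_mul_normalPDF_mul_gammaPDF {s ν : ℝ} (hs : 0 < s) (hν : 0 < ν)
    (x y : ℝ) :
    ∫ l in Ioi 0, normalPDF 0 (s / l) x * normalPDF 0 (s / l) y * gammaPDF (ν / 2) (ν / 2) l =
      tPDF 0 s ν x * tPDF 0 ((ν * s + x ^ 2) / (ν + 1)) (ν + 1) y := by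
  have hE : 0 < ν * s + x ^ 2 + y ^ 2 := by positivity
  have hΓ := integral_rpow_mul_exp_neg_mul_Ioi (a := ν / 2 + 1)
    (r := (ν * s + x ^ 2 + y ^ 2) / (2 * s)) (by positivity) (by positivity)
  have hpow : (ν / 2) ^ (ν / 2) * (2 * s) ^ (ν / 2) = ν ^ (ν / 2) * s ^ (ν / 2) := by
    rw [← mul_rpow (by positivity) (by positivity), ← mul_rpow hν.le hs.le]
    ring_nf
  rw [add_sub_cancel_right] at hΓ
  rw [setIntegral_congr_fun measurableSet_Ioi
      (fun l hl => normalPDF_mul_normalPDF_mul_gammaPDF hs hl ν x y),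
    integral_const_mul, hΓ, tPDF_mul_tPDF hs hν, one_div_div, div_rpow (by positivity) hE.le,
    rpow_add_one (by positivity), rpow_neg hE.le, ← hpow]
  field_simp

lemma integrable_tPDF {n q : ℝ} (hn : 0 < n) (hq : 0 < q) : Integrable (tPDF 0 q n) := by
  have hnq : √(n * q) ≠ 0 := (sqrt_pos.2 (mul_pos hn hq)).ne'
  refine (((integrable_rpow_neg_one_add_norm_sq (E := ℝ) (μ := volume) (r := n + 1)
    (by simpa using hn)).comp_div hnq).const_mul
      (Gamma ((n + 1) / 2) / (√q * √(n * π) * Gamma (n / 2)))).congr (ae_of_all _ fun y => ?_)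
  simp only [tPDF, Real.norm_eq_abs, sq_abs, div_pow, sq_sqrt (mul_pos hn hq).le, neg_div,
    sub_zero]

lemma tPDF_zero_eq_mul_tPDF_one {q : ℝ} (hq : 0 < q) (n y : ℝ) :
    tPDF 0 q n y = √(q⁻¹) * tPDF 0 1 n (√(q⁻¹) * y) := by
  unfold tPDF
  rw [sub_zero, sub_zero, mul_pow, sq_sqrt (by positivity), sqrt_inv, sqrt_one]
  field_simp

lemma setIntegral_Iic_tPDF {q : ℝ} (hq : 0 < q) (n c : ℝ) :
    ∫ y in Iic c, tPDF 0 q n y = tCDF n (c * √(q⁻¹)) := by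
  have hb : 0 < √(q⁻¹) := by positivity
  simp_rw [tPDF_zero_eq_mul_tPDF_one hq n, integral_const_mul,
    integral_comp_mul_left_Iic _ _ hb, smul_eq_mul, mul_inv_cancel_left₀ hb.ne', tCDF, mul_comm c]

lemma integrable_normalPDF_mul_normalPDF_mul_gammaPDF {s ν : ℝ} (hs : 0 < s) (hν : 0 < ν)
    (x : ℝ) :
    Integrable (fun p : ℝ × ℝ =>
        normalPDF 0 (s / p.1) x * normalPDF 0 (s / p.1) p.2 * gammaPDF (ν / 2) (ν / 2) p.1)
      ((volume.restrict (Ioi 0)).prod volume) := by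
  have hmeas : Measurable (fun p : ℝ × ℝ =>
      normalPDF 0 (s / p.1) x * normalPDF 0 (s / p.1) p.2 * gammaPDF (ν / 2) (ν / 2) p.1) := by
    unfold normalPDF gammaPDF
    fun_prop
  rw [integrable_prod_iff' hmeas.aestronglyMeasurable]
  constructor
  · refine ae_of_all _ fun y => ?_
    refine IntegrableOn.congr_fun ((integrableOn_rpow_mul_exp_neg_mul_rpow (s := ν / 2)
      (by linarith) one_pos (by positivity : 0 < (ν * s + x ^ 2 + y ^ 2) / (2 * s))).const_mul
        ((ν / 2) ^ (ν / 2) / (2 * π * s * Gamma (ν / 2)))) (fun l hl => ?_) measurableSet_Ioi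
    rw [normalPDF_mul_normalPDF_mul_gammaPDF hs hl, rpow_one, neg_mul]
  · refine ((integrable_tPDF (by linarith : 0 < ν + 1) (by positivity :
      0 < (ν * s + x ^ 2) / (ν + 1))).const_mul (tPDF 0 s ν x)).congr (ae_of_all _ fun y => ?_)
    dsimp only
    rw [← integral_normalPDF_mul_normalPDF_mul_gammaPDF hs hν]
    refine setIntegral_congr_fun measurableSet_Ioi fun l (hl : 0 < l) => (norm_of_nonneg ?_).symm
    have hΓ := Gamma_pos_of_pos (half_pos hν)
    have hgamma : 0 ≤ gammaPDF (ν / 2) (ν / 2) l := by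
      unfold gammaPDF
      positivity
    exact mul_nonneg (mul_nonneg (normalPDF_nonneg _ _ _) (normalPDF_nonneg _ _ _)) hgamma

/-- hierarchical representation of the univariate skew t-distribution:
marginalizing `λ ∼ Gamma(ν/2, ν/2)`, `u | λ ∼ N₊(0, λ⁻¹)` and `e | u, λ ∼ N(δu, λ⁻¹σ²)`
yields the skew t density `ST(0, σ², δ, ν)`. -/
theorem stmt_12 (σ δ ν : ℝ) (hσ : 0 < σ) (hν : 0 < ν) :
    ∀ e : ℝ,
      (∫ l in Set.Ioi (0 : ℝ), ∫ u in Set.Ici (0 : ℝ),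
        normalPDF (δ * u) (σ ^ 2 / l) e * (2 * normalPDF 0 l⁻¹ u) * gammaPDF (ν / 2) (ν / 2) l)
      = stPDF 0 σ δ ν e := by
  intro e
  have hs : 0 < σ ^ 2 + δ ^ 2 := by positivity
  set f : ℝ → ℝ → ℝ := fun l y =>
    normalPDF 0 ((σ ^ 2 + δ ^ 2) / l) e * normalPDF 0 ((σ ^ 2 + δ ^ 2) / l) y *
      gammaPDF (ν / 2) (ν / 2) l
  have hskew (l : ℝ) (hl : l ∈ Ioi 0) :
      ∫ u in Ici 0, normalPDF (δ * u) (σ ^ 2 / l) e * (2 * normalPDF 0 l⁻¹ u) *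
        gammaPDF (ν / 2) (ν / 2) l = 2 * ∫ y in Iic (e * δ / σ), f l y := by
    have h := setIntegral_Ici_normalPDF_mul_normalPDF hσ (inv_pos.2 hl) δ e
    simp only [← div_eq_mul_inv] at h
    simp only [f, integral_mul_const, mul_left_comm _ (2 : ℝ), integral_const_mul, h]
    ring
  have hf : Integrable (Function.uncurry f) ((volume.restrict (Ioi 0)).prod
      (volume.restrict (Iic (e * δ / σ)))) :=
    (integrable_normalPDF_mul_normalPDF_mul_gammaPDF hs hν e).mono_measure
      (Measure.prod_mono le_rfl Measure.restrict_le_self)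
  calc _ = ∫ l in Ioi 0, 2 * ∫ y in Iic (e * δ / σ), f l y :=
        setIntegral_congr_fun measurableSet_Ioi hskew
    _ = 2 * ∫ y in Iic (e * δ / σ), ∫ l in Ioi 0, f l y := by
      rw [integral_const_mul, integral_integral_swap hf]
    _ = stPDF 0 σ δ ν e := by
      simp only [f, integral_normalPDF_mul_normalPDF_mul_gammaPDF hs hν, integral_const_mul,
        setIntegral_Iic_tPDF (by positivity : 0 < (ν * (σ ^ 2 + δ ^ 2) + e ^ 2) / (ν + 1)),
        inv_div, stPDF, sub_zero]
      ring
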